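/- arXiv:2510.07443 — 7 statements merged into one kernel-verified Lean document; each statement's English description precedes it below -/
import Mathlib

section
/- Let X be a compact Hausdorff topological space. Then the map X → MSpec(C(X,ℝ)) sending x to the maximal ideal m_x = {f ∈ C(X,ℝ) | f(x) = 0} is a homeomorphism, where MSpec(C(X,ℝ)) carries the subspace topology inherited from the Zariski topology on the prime spectrum. Likewise, the map X → MSpec(C(X,ℂ)) sending x to {f ∈ C(X,ℂ) | f(x) = 0} is a homeomorphism. -/
/-! The Zariski topology on the maximal spectrum, induced from the prime spectrum. -/
noncomputable instance maximalSpectrum.topologicalSpace (R : Type*) [CommRing R] :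
    TopologicalSpace (MaximalSpectrum R) :=
  TopologicalSpace.induced MaximalSpectrum.toPrimeSpectrum inferInstance

/-- Evaluation at a point of `X`, as a ring homomorphism `C(X, R) →+* R`. -/
def evalHom {X : Type*} [TopologicalSpace X] (R : Type*) [TopologicalSpace R] [CommSemiring R]
    [IsTopologicalSemiring R] (x : X) : C(X, R) →+* R :=
  (Pi.evalRingHom (fun _ => R) x).comp ContinuousMap.coeFnRingHom

/-- The ideal `m_x = {f : C(X, K) | f x = 0}`, i.e. the kernel of evaluation at `x`, is a
maximal ideal of `C(X, K)` for any topological field `K`. -/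
theorem ker_evalHom_isMaximal {X : Type*} [TopologicalSpace X] (K : Type*) [TopologicalSpace K]
    [Field K] [IsTopologicalRing K] (x : X) : (RingHom.ker (evalHom K x)).IsMaximal :=
  RingHom.ker_isMaximal_of_surjective _ fun r => ⟨ContinuousMap.const X r, rfl⟩

/-- The canonical map `ι_X : X → MSpec (C(X, K))`, sending `x` to the maximal ideal
`m_x = {f | f x = 0}`. -/
noncomputable def iotaMax {X : Type*} [TopologicalSpace X] (K : Type*) [TopologicalSpace K]
    [Field K] [IsTopologicalRing K] (x : X) : MaximalSpectrum C(X, K) :=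
  ⟨RingHom.ker (evalHom K x), ker_evalHom_isMaximal K x⟩


section Aux

open ContinuousMap

variable {X : Type*} [TopologicalSpace X]

theorem evalHom_apply (K : Type*) [TopologicalSpace K] [CommSemiring K] [IsTopologicalSemiring K]
    (x : X) (f : C(X, K)) : evalHom K x f = f x := rfl

theorem ker_evalHom_eq (𝕜 : Type*) [RCLike 𝕜] (x : X) :
    RingHom.ker (evalHom 𝕜 x) = ContinuousMap.idealOfSet 𝕜 ({x}ᶜ : Set X) := by
  ext f
  simp [RingHom.mem_ker, ContinuousMap.mem_idealOfSet_compl_singleton, evalHom_apply]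

theorem iotaMax_isHomeomorph (𝕜 : Type*) [RCLike 𝕜] [CompactSpace X] [T2Space X] :
    IsHomeomorph (fun x : X => iotaMax 𝕜 x) := by
  have hker : ∀ x : X, ∀ f : C(X, 𝕜), f ∈ (iotaMax 𝕜 x).asIdeal ↔ f x = 0 := by
    intro x f; exact Iff.rfl
  -- surjectivity
  have hsurj : Function.Surjective (fun x : X => iotaMax 𝕜 x) := by
    intro m
    obtain ⟨x, hx⟩ := (ContinuousMap.ideal_isMaximal_iff (𝕜 := 𝕜) m.asIdeal).mp m.isMaximal
    refine ⟨x, MaximalSpectrum.ext ?_⟩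
    rw [show (iotaMax 𝕜 x).asIdeal = RingHom.ker (evalHom 𝕜 x) from rfl, ker_evalHom_eq, hx]
  -- injectivity
  have hinj : Function.Injective (fun x : X => iotaMax 𝕜 x) := by
    intro x y hxy
    by_contra hne
    obtain ⟨f, hf0, hf1, -⟩ := exists_continuous_zero_one_of_isClosed
      (isClosed_singleton (x := x)) (isClosed_singleton (x := y))
      (Set.disjoint_singleton.mpr hne)
    set g : C(X, 𝕜) := ⟨fun z => (f z : 𝕜), RCLike.continuous_ofReal.comp f.continuous⟩
    have hgx : g ∈ (iotaMax 𝕜 x).asIdeal := by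
      rw [hker]
      simp [g, hf0 (Set.mem_singleton x)]
    simp only at hxy
    rw [hxy, hker] at hgx
    have : g y = 1 := by simp [g, hf1 (Set.mem_singleton y)]
    rw [this] at hgx
    exact one_ne_zero hgx
  -- continuity
  have hcont : Continuous (fun x : X => iotaMax 𝕜 x) := by
    rw [continuous_induced_rng]
    rw [continuous_iff_isClosed]
    intro Z hZ
    obtain ⟨s, rfl⟩ := (PrimeSpectrum.isClosed_iff_zeroLocus _).mp hZ
    have : (MaximalSpectrum.toPrimeSpectrum ∘ fun x : X => iotaMax 𝕜 x) ⁻¹' PrimeSpectrum.zeroLocus s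
        = ⋂ f ∈ s, (f ⁻¹' {0} : Set X) := by
      ext x
      simp only [Set.mem_preimage, PrimeSpectrum.mem_zeroLocus, Set.subset_def,
        Set.mem_iInter, Set.mem_singleton_iff]
      constructor
      · intro h f hf
        exact h f hf
      · intro h f hf
        exact h f hf
    rw [this]
    exact isClosed_biInter fun f _ => (isClosed_singleton).preimage f.continuous
  -- closed map
  have hclosed : IsClosedMap (fun x : X => iotaMax 𝕜 x) := by
    intro C hC
    have himg : (fun x : X => iotaMax 𝕜 x) '' C =
        MaximalSpectrum.toPrimeSpectrum ⁻¹'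
          (PrimeSpectrum.zeroLocus (ContinuousMap.idealOfSet 𝕜 (Cᶜ : Set X) : Set C(X, 𝕜))) := by
      ext m
      simp only [Set.mem_image, Set.mem_preimage, PrimeSpectrum.mem_zeroLocus]
      constructor
      · rintro ⟨x, hxC, rfl⟩ f hf
        exact (hker x f).mpr ((ContinuousMap.mem_idealOfSet.mp hf) (by simpa using hxC))
      · intro hm
        obtain ⟨x, rfl⟩ := hsurj m
        refine ⟨x, ?_, rfl⟩
        by_contra hx
        obtain ⟨f, hf0, hf1, -⟩ := exists_continuous_zero_one_of_isClosed hC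
          (isClosed_singleton (x := x)) (Set.disjoint_singleton_right.mpr hx)
        set g : C(X, 𝕜) := ⟨fun z => (f z : 𝕜), RCLike.continuous_ofReal.comp f.continuous⟩
        have hg : g ∈ (ContinuousMap.idealOfSet 𝕜 (Cᶜ : Set X) : Set C(X, 𝕜)) := by
          refine ContinuousMap.mem_idealOfSet.mpr fun z hz => ?_
          simp only [compl_compl] at hz
          simp [g, hf0 hz]
        have hm' : g ∈ ((fun x : X => iotaMax 𝕜 x) x).toPrimeSpectrum.asIdeal := hm hg
        have := (hker x g).mp hm'
        have hgx : g x = 1 := by simp [g, hf1 (Set.mem_singleton x)]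
        rw [hgx] at this
        exact one_ne_zero this
    rw [himg]
    exact (PrimeSpectrum.isClosed_zeroLocus _).preimage continuous_induced_dom
  exact isHomeomorph_iff_continuous_isClosedMap_bijective.mpr ⟨hcont, hclosed, hinj, hsurj⟩

end Aux

/-- For a compact Hausdorff space `X`, the map `X → MSpec (C(X, ℝ))`, `x ↦ m_x`, is a
homeomorphism, and likewise the map `X → MSpec (C(X, ℂ))`. -/
theorem stmt0 (X : Type*) [TopologicalSpace X] [CompactSpace X] [T2Space X] :
    IsHomeomorph (fun x : X => iotaMax ℝ x) ∧ IsHomeomorph (fun x : X => iotaMax ℂ x) := by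
  exact ⟨iotaMax_isHomeomorph ℝ, iotaMax_isHomeomorph ℂ⟩
end

section
/- Let A be a commutative pm-ring. Then the map r : Spec(A) → MSpec(A) sending each prime ideal 𝔭 to the unique maximal ideal of A containing 𝔭 is continuous, and r(𝔪) = 𝔪 for every maximal ideal 𝔪 of A; that is, r is a continuous retraction of the inclusion MSpec(A) ↪ Spec(A). -/
/-- A commutative ring is a pm-ring if every prime ideal is contained in a unique
maximal ideal. -/
def IsPMRing (A : Type*) [CommRing A] : Prop :=
  ∀ p : Ideal A, p.IsPrime → ∃! m : Ideal A, m.IsMaximal ∧ p ≤ m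

/-- In a pm-ring, two distinct maximal ideals can be "separated": there are `a ∉ m`, `b ∉ n`
with `a * b` nilpotent. -/
lemma pm_sep {A : Type*} [CommRing A] (hA : IsPMRing A) {m n : Ideal A}
    (hm : m.IsMaximal) (hn : n.IsMaximal) (hmn : m ≠ n) :
    ∃ a b : A, a ∉ m ∧ b ∉ n ∧ IsNilpotent (a * b) := by
  by_contra hcon
  push_neg at hcon
  have h1m : (1 : A) ∉ m := fun h => hm.ne_top ((Ideal.eq_top_iff_one m).mpr h)
  have h1n : (1 : A) ∉ n := fun h => hn.ne_top ((Ideal.eq_top_iff_one n).mpr h)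
  set S : Submonoid A :=
    { carrier := {x | ∃ a b : A, a ∉ m ∧ b ∉ n ∧ x = a * b}
      mul_mem' := by
        rintro x y ⟨a, b, ha, hb, rfl⟩ ⟨c, d, hc, hd, rfl⟩
        exact ⟨a * c, b * d, fun hac => ((hm.isPrime.mem_or_mem hac).elim ha hc),
          fun hbd => ((hn.isPrime.mem_or_mem hbd).elim hb hd), by ring⟩
      one_mem' := ⟨1, 1, h1m, h1n, by ring⟩ } with hS
  have hdisj : Disjoint ((⊥ : Ideal A) : Set A) (S : Set A) := by
    rw [Set.disjoint_left]
    rintro x hx ⟨a, b, ha, hb, rfl⟩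
    have : a * b = 0 := by simpa using hx
    exact hcon a b ha hb ⟨1, by simpa using this⟩
  obtain ⟨p, hp, -, hpS⟩ := Ideal.exists_le_prime_disjoint _ S hdisj
  have hpm : p ≤ m := by
    intro x hx
    by_contra hxm
    exact Set.disjoint_left.mp hpS hx ⟨x, 1, hxm, h1n, by ring⟩
  have hpn : p ≤ n := by
    intro x hx
    by_contra hxn
    exact Set.disjoint_left.mp hpS hx ⟨1, x, h1m, hxn, by ring⟩
  obtain ⟨u, -, hu⟩ := hA p hp
  exact hmn ((hu m ⟨hm, hpm⟩).trans (hu n ⟨hn, hpn⟩).symm)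

/-- For a pm-ring `A`, the map `r : Spec A → MSpec A` sending each prime ideal to the unique
maximal ideal containing it (i.e. any map `r` with `p ≤ r p` for all primes `p`) is continuous,
and it restricts to the identity on maximal ideals, i.e. it is a continuous retraction of the
inclusion `MSpec A ↪ Spec A`. -/
theorem stmt3 (A : Type*) [CommRing A] (hA : IsPMRing A)
    (r : PrimeSpectrum A → MaximalSpectrum A)
    (hr : ∀ p : PrimeSpectrum A, p.asIdeal ≤ (r p).asIdeal) :
    Continuous r ∧ ∀ m : MaximalSpectrum A, r m.toPrimeSpectrum = m := by
  constructor
  · rw [continuous_induced_rng]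
    rw [PrimeSpectrum.isTopologicalBasis_basic_opens.continuous_iff]
    rintro _ ⟨f, rfl⟩
    rw [isOpen_iff_forall_mem_open]
    intro p hp
    have hp' : f ∉ (r p).asIdeal := hp
    -- for every prime q containing f, separate r p from r q
    set Z : Set (PrimeSpectrum A) := PrimeSpectrum.zeroLocus {f} with hZ
    have H : ∀ q : Z, ∃ a b : A, a ∉ (r p).asIdeal ∧ b ∉ (r q.1).asIdeal ∧
        IsNilpotent (a * b) := by
      rintro ⟨q, hq⟩
      have hfq : f ∈ q.asIdeal := hq (Set.mem_singleton f)
      have hfrq : f ∈ (r q).asIdeal := hr q hfq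
      exact pm_sep hA (r p).isMaximal (r q).isMaximal
        (fun h => hp' (h ▸ hfrq))
    choose a b ha hb hab using H
    -- Z is compact and covered by the basic opens D(b q)
    have hZcov : Z ⊆ ⋃ q : Z, (PrimeSpectrum.basicOpen (b q) : Set (PrimeSpectrum A)) := by
      intro q hq
      refine Set.mem_iUnion.mpr ⟨⟨q, hq⟩, ?_⟩
      exact fun h => hb ⟨q, hq⟩ (hr q h)
    obtain ⟨t, ht⟩ := (PrimeSpectrum.isClosed_zeroLocus ({f} : Set A)).isCompact.elim_finite_subcover
      (fun q : Z => (PrimeSpectrum.basicOpen (b q) : Set (PrimeSpectrum A)))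
      (fun q => PrimeSpectrum.isOpen_basicOpen) hZcov
    refine ⟨(PrimeSpectrum.basicOpen (∏ i ∈ t, a i) : Set (PrimeSpectrum A)), ?_,
      PrimeSpectrum.isOpen_basicOpen, ?_⟩
    · -- basicOpen ⊆ preimage
      intro p' hp'mem
      have hgp' : (∏ i ∈ t, a i) ∉ p'.asIdeal := hp'mem
      show f ∉ (r p').asIdeal
      intro hf
      have hrZ : (r p').toPrimeSpectrum ∈ Z := by
        intro x hx
        rw [Set.mem_singleton_iff] at hx
        subst hx
        exact hf
      obtain ⟨i, hit, hbi⟩ := Set.mem_iUnion₂.mp (ht hrZ)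
      have hbi' : b i ∉ (r p').asIdeal := hbi
      obtain ⟨k, hk⟩ := hab i
      have hnil : a i * b i ∈ p'.asIdeal :=
        p'.isPrime.mem_of_pow_mem k (by rw [hk]; exact Ideal.zero_mem _)
      rcases p'.isPrime.mem_or_mem hnil with hai | hbi2
      · exact hgp' (Ideal.IsPrime.prod_mem_iff.mpr ⟨i, hit, hai⟩)
      · exact hbi' (hr p' hbi2)
    · -- p ∈ basicOpen (∏ a i)
      show (∏ i ∈ t, a i) ∉ p.asIdeal
      intro hmem
      obtain ⟨i, -, hai⟩ := Ideal.IsPrime.prod_mem_iff.mp (hr p hmem)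
      exact ha i hai
  · intro m
    have h1 : m.asIdeal ≤ (r m.toPrimeSpectrum).asIdeal := hr m.toPrimeSpectrum
    have h2 : m.asIdeal = (r m.toPrimeSpectrum).asIdeal :=
      m.isMaximal.eq_of_le (r m.toPrimeSpectrum).isMaximal.ne_top h1
    exact MaximalSpectrum.ext h2.symm
end

section
/- Let A be a commutative pm-ring. Then MSpec(A), equipped with the subspace topology inherited from the Zariski topology on Spec(A), is a compact Hausdorff topological space. -/
lemma maximalSpectrum_isInducing (R : Type*) [CommRing R] :
    Topology.IsInducing (MaximalSpectrum.toPrimeSpectrum (R := R)) :=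
  ⟨rfl⟩

/-- The set of closed points of the prime spectrum is compact. -/
lemma isCompact_range_toPrimeSpectrum (R : Type*) [CommRing R] :
    IsCompact (Set.range (MaximalSpectrum.toPrimeSpectrum (R := R))) := by
  rw [isCompact_iff_finite_subcover]
  intro ι U hU hcov
  -- each open set is the complement of a zero locus
  choose s hs using fun i => (PrimeSpectrum.isOpen_iff (U i)).mp (hU i)
  -- the union of the s i generates the unit ideal
  have htop : Ideal.span (⋃ i, s i) = ⊤ := by
    by_contra h
    obtain ⟨m, hm, hle⟩ := Ideal.exists_le_maximal _ h
    have hmem : (⟨m, hm⟩ : MaximalSpectrum R).toPrimeSpectrum ∈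
        Set.range (MaximalSpectrum.toPrimeSpectrum (R := R)) := ⟨_, rfl⟩
    obtain ⟨i, hi⟩ := Set.mem_iUnion.mp (hcov hmem)
    have : (⟨m, hm⟩ : MaximalSpectrum R).toPrimeSpectrum ∉ PrimeSpectrum.zeroLocus (s i) := by
      intro hz
      have : (⟨m, hm⟩ : MaximalSpectrum R).toPrimeSpectrum ∈ (U i)ᶜ := (hs i) ▸ hz
      exact this hi
    exact this fun x hx => hle (Ideal.subset_span (Set.mem_iUnion.mpr ⟨i, hx⟩))
  have h1 : (1 : R) ∈ Ideal.span (⋃ i, s i) := htop ▸ Submodule.mem_top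
  rw [Ideal.span_iUnion, Submodule.mem_iSup_iff_exists_finset] at h1
  obtain ⟨F, hF⟩ := h1
  refine ⟨F, fun x hx => ?_⟩
  obtain ⟨y, rfl⟩ := hx
  by_contra hc
  simp only [Set.mem_iUnion, not_exists] at hc
  have hsub : ∀ i ∈ F, s i ⊆ y.asIdeal := by
    intro i hi
    have : y.toPrimeSpectrum ∈ (U i)ᶜ := fun h => hc i hi h
    rw [hs i] at this
    exact this
  have : (⨆ i ∈ F, Ideal.span (s i)) ≤ y.asIdeal := by
    refine iSup₂_le fun i hi => Ideal.span_le.mpr (hsub i hi)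
  have h1y : (1 : R) ∈ y.asIdeal := this hF
  exact y.isMaximal.ne_top ((Ideal.eq_top_iff_one _).mpr h1y)

/-- In a pm-ring, two distinct maximal ideals can be separated: there are `a ∉ m`, `b ∉ n`
with `a * b` in every maximal ideal. -/
lemma IsPMRing.exists_separating {A : Type*} [CommRing A] (hA : IsPMRing A)
    {m n : Ideal A} (hm : m.IsMaximal) (hn : n.IsMaximal) (hmn : m ≠ n) :
    ∃ a b : A, a ∉ m ∧ b ∉ n ∧ ∀ k : Ideal A, k.IsMaximal → a * b ∈ k := by
  by_contra h
  push_neg at h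
  -- the multiplicative set of products a*b with a ∉ m, b ∉ n
  let S : Submonoid A :=
    { carrier := { x | ∃ a b : A, a ∉ m ∧ b ∉ n ∧ x = a * b }
      mul_mem' := by
        rintro x y ⟨a, b, ha, hb, rfl⟩ ⟨c, d, hc, hd, rfl⟩
        exact ⟨a * c, b * d, fun h => ((hm.isPrime.mem_or_mem h).elim ha hc),
          fun h => ((hn.isPrime.mem_or_mem h).elim hb hd), by ring⟩
      one_mem' := ⟨1, 1, hm.isPrime.ne_top ∘ ((Ideal.eq_top_iff_one m).mpr),
        hn.isPrime.ne_top ∘ ((Ideal.eq_top_iff_one n).mpr), (one_mul 1).symm⟩ }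
  -- S is disjoint from the Jacobson radical, in particular from ⊥
  have hdisj : Disjoint ((⊥ : Ideal A) : Set A) (S : Set A) := by
    rw [Set.disjoint_left]
    rintro x hx ⟨a, b, ha, hb, rfl⟩
    obtain ⟨k, hk, hab⟩ := h a b ha hb
    have : a * b = 0 := hx
    exact hab (this ▸ k.zero_mem)
  obtain ⟨p, hp, -, hpS⟩ := Ideal.exists_le_prime_disjoint (⊥ : Ideal A) S hdisj
  have h1m : (1 : A) ∉ m := fun h => hm.ne_top ((Ideal.eq_top_iff_one m).mpr h)
  have h1n : (1 : A) ∉ n := fun h => hn.ne_top ((Ideal.eq_top_iff_one n).mpr h)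
  have hpm : p ≤ m := fun x hx => by
    by_contra hxm
    exact Set.disjoint_left.mp hpS hx ⟨x, 1, hxm, h1n, (mul_one x).symm⟩
  have hpn : p ≤ n := fun x hx => by
    by_contra hxn
    exact Set.disjoint_left.mp hpS hx ⟨1, x, h1m, hxn, (one_mul x).symm⟩
  obtain ⟨k, -, huniq⟩ := hA p hp
  exact hmn ((huniq m ⟨hm, hpm⟩).trans (huniq n ⟨hn, hpn⟩).symm)

/-- For a pm-ring `A`, the maximal spectrum `MSpec A`, with the subspace topology inherited from
the Zariski topology on `Spec A`, is a compact Hausdorff space. -/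
theorem stmt4 (A : Type*) [CommRing A] (hA : IsPMRing A) :
    CompactSpace (MaximalSpectrum A) ∧ T2Space (MaximalSpectrum A) := by
  constructor
  · refine ⟨?_⟩
    rw [(maximalSpectrum_isInducing A).isCompact_iff, Set.image_univ]
    exact isCompact_range_toPrimeSpectrum A
  · refine ⟨fun x y hxy => ?_⟩
    have hmn : x.asIdeal ≠ y.asIdeal := fun h =>
      hxy (MaximalSpectrum.ext h)
    obtain ⟨a, b, ha, hb, hab⟩ := hA.exists_separating x.isMaximal y.isMaximal hmn
    refine ⟨MaximalSpectrum.toPrimeSpectrum ⁻¹' (PrimeSpectrum.basicOpen a : Set (PrimeSpectrum A)),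
      MaximalSpectrum.toPrimeSpectrum ⁻¹' (PrimeSpectrum.basicOpen b : Set (PrimeSpectrum A)),
      (PrimeSpectrum.isOpen_basicOpen).preimage (maximalSpectrum_isInducing A).continuous,
      (PrimeSpectrum.isOpen_basicOpen).preimage (maximalSpectrum_isInducing A).continuous,
      ha, hb, ?_⟩
    rw [Set.disjoint_left]
    rintro k hka hkb
    have h1 : a ∉ k.asIdeal := hka
    have h2 : b ∉ k.asIdeal := hkb
    have := hab k.asIdeal k.isMaximal
    exact (k.isMaximal.isPrime.mem_or_mem this).elim h1 h2
end

section
/- For any topological space X, the commutative ring C(X,ℝ) is a pm-ring: every prime ideal of C(X,ℝ) is contained in a unique maximal ideal. -/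
/-- Gelfand-type lemma for `C(X, ℝ)`: if `f + g = 1`, there are `r`, `s` with
`(1 + f*r) * (1 + g*s) = 0`. -/
lemma gelfand_CX (X : Type*) [TopologicalSpace X] (f g : C(X, ℝ)) (h : f + g = 1) :
    ∃ r s : C(X, ℝ), (1 + f * r) * (1 + g * s) = 0 := by
  have hfc : Continuous fun x => f x := f.continuous
  have hgc : Continuous fun x => g x := g.continuous
  have hden1 : ∀ x : X, max (f x) (1/2 : ℝ) ≠ 0 := fun x =>
    ne_of_gt (lt_of_lt_of_le (by norm_num) (le_max_right _ _))
  have hden2 : ∀ x : X, max (g x) (1/2 : ℝ) ≠ 0 := fun x =>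
    ne_of_gt (lt_of_lt_of_le (by norm_num) (le_max_right _ _))
  refine ⟨⟨fun x => -(min 1 (max 0 (2 - 2 * g x))) / max (f x) (1/2), ?_⟩,
          ⟨fun x => -(min 1 (max 0 (2 - 2 * f x))) / max (g x) (1/2), ?_⟩, ?_⟩
  · exact Continuous.div (by fun_prop) (by fun_prop) hden1
  · exact Continuous.div (by fun_prop) (by fun_prop) hden2
  · ext x
    have hab : f x + g x = 1 := by
      have := congrArg (fun u : C(X, ℝ) => u x) h
      simpa using this
    simp only [ContinuousMap.mul_apply, ContinuousMap.add_apply, ContinuousMap.one_apply,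
      ContinuousMap.coe_mk, ContinuousMap.zero_apply]
    set a := f x with ha
    set b := g x with hb
    rcases le_or_gt b (1/2 : ℝ) with hble | hbgt
    · have hage : (1/2 : ℝ) ≤ a := by linarith
      have hane : a ≠ 0 := by linarith
      have h1 : max a (1/2 : ℝ) = a := max_eq_left hage
      have h2 : max (0 : ℝ) (2 - 2 * b) = 2 - 2 * b := max_eq_right (by linarith)
      have h3 : min (1 : ℝ) (2 - 2 * b) = 1 := min_eq_left (by linarith)
      have : 1 + a * (-(min 1 (max 0 (2 - 2 * b))) / max a (1/2)) = 0 := by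
        rw [h1, h2, h3]
        field_simp
        norm_num
      rw [this, zero_mul]
    · have halt : a ≤ (1/2 : ℝ) := by linarith
      have hbne : b ≠ 0 := by linarith
      have h1 : max b (1/2 : ℝ) = b := max_eq_left (by linarith)
      have h2 : max (0 : ℝ) (2 - 2 * a) = 2 - 2 * a := max_eq_right (by linarith)
      have h3 : min (1 : ℝ) (2 - 2 * a) = 1 := min_eq_left (by linarith)
      have : 1 + b * (-(min 1 (max 0 (2 - 2 * a))) / max b (1/2)) = 0 := by
        rw [h1, h2, h3]
        field_simp
        norm_num
      rw [this, mul_zero]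

/-- For any topological space `X`, the ring `C(X, ℝ)` of continuous real-valued functions is a
pm-ring: every prime ideal is contained in a unique maximal ideal. -/
theorem stmt5 (X : Type*) [TopologicalSpace X]
    (p : Ideal C(X, ℝ)) (hp : p.IsPrime) :
    ∃! m : Ideal C(X, ℝ), m.IsMaximal ∧ p ≤ m := by
  obtain ⟨m, hm, hpm⟩ := p.exists_le_maximal hp.ne_top
  refine ⟨m, ⟨hm, hpm⟩, ?_⟩
  rintro m' ⟨hm', hpm'⟩
  by_contra hne
  have hsup : m' ⊔ m = ⊤ := Ideal.IsMaximal.coprime_of_ne hm' hm hne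
  have h1mem : (1 : C(X, ℝ)) ∈ m' ⊔ m := hsup ▸ Submodule.mem_top
  obtain ⟨f, hf, g, hg, hfg⟩ := Submodule.mem_sup.mp h1mem
  obtain ⟨r, s, hrs⟩ := gelfand_CX X f g hfg
  have h0 : (1 + f * r) * (1 + g * s) ∈ p := hrs ▸ p.zero_mem
  rcases hp.mem_or_mem h0 with hmem | hmem
  · have : (1 : C(X, ℝ)) ∈ m' := by
      have h' : 1 + f * r ∈ m' := hpm' hmem
      have hfr : f * r ∈ m' := m'.mul_mem_right r hf
      simpa using m'.sub_mem h' hfr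
    exact hm'.ne_top (Ideal.eq_top_iff_one m' |>.mpr this)
  · have : (1 : C(X, ℝ)) ∈ m := by
      have h' : 1 + g * s ∈ m := hpm hmem
      have hgs : g * s ∈ m := m.mul_mem_right s hg
      simpa using m.sub_mem h' hgs
    exact hm.ne_top (Ideal.eq_top_iff_one m |>.mpr this)
end

section
/- For any topological space X, the commutative ring C(X,ℂ) is a pm-ring: every prime ideal of C(X,ℂ) is contained in a unique maximal ideal. -/
open Complex

lemma gelfand_cond (X : Type*) [TopologicalSpace X] (a b : C(X, ℂ)) (hab : a + b = 1) :
    ∃ r s : C(X, ℂ), (1 + r * a) * (1 + s * b) = 0 := by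
  have hc : ∀ f : C(X, ℂ), Continuous fun x =>
      -(starRingEnd ℂ (f x)) / ((max (Complex.normSq (f x)) (1/4) : ℝ) : ℂ) := by
    intro f
    apply Continuous.div
    · exact ((Complex.continuous_conj.comp f.continuous)).neg
    · exact Complex.continuous_ofReal.comp
        ((Complex.continuous_normSq.comp f.continuous).max continuous_const)
    · intro x
      have h4 : (0:ℝ) < max (Complex.normSq (f x)) (1/4) :=
        lt_of_lt_of_le (by norm_num) (le_max_right _ _)
      exact_mod_cast ne_of_gt h4
  refine ⟨⟨_, hc a⟩, ⟨_, hc b⟩, ?_⟩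
  ext x
  have hx : a x + b x = 1 := by
    have := congrArg (fun f : C(X, ℂ) => f x) hab
    simpa using this
  have hnorm : (1:ℝ) ≤ ‖a x‖ + ‖b x‖ := by
    calc (1:ℝ) = ‖a x + b x‖ := by rw [hx]; simp
    _ ≤ ‖a x‖ + ‖b x‖ := norm_add_le _ _
  have key : ∀ z : ℂ, (1/4 : ℝ) ≤ Complex.normSq z →
      (1 : ℂ) + -(starRingEnd ℂ z) / ((max (Complex.normSq z) (1/4) : ℝ) : ℂ) * z = 0 := by
    intro z hz
    have hmax : max (Complex.normSq z) (1/4) = Complex.normSq z := max_eq_left hz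
    have hne : (Complex.normSq z : ℂ) ≠ 0 := by
      have : (0:ℝ) < Complex.normSq z := lt_of_lt_of_le (by norm_num) hz
      exact_mod_cast ne_of_gt this
    rw [hmax]
    field_simp
    rw [← Complex.normSq_eq_conj_mul_self]
    ring
  have hcase : (1/4:ℝ) ≤ Complex.normSq (a x) ∨ (1/4:ℝ) ≤ Complex.normSq (b x) := by
    by_contra h
    push_neg at h
    have ha : ‖a x‖ < 1/2 := by
      nlinarith [Complex.sq_norm (a x), norm_nonneg (a x), h.1]
    have hb : ‖b x‖ < 1/2 := by
      nlinarith [Complex.sq_norm (b x), norm_nonneg (b x), h.2]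
    linarith
  simp only [ContinuousMap.coe_mul, ContinuousMap.coe_add, ContinuousMap.coe_one,
    ContinuousMap.coe_mk, ContinuousMap.coe_zero, Pi.mul_apply, Pi.add_apply, Pi.one_apply,
    Pi.zero_apply]
  rcases hcase with h | h
  · rw [key (a x) h]; ring
  · rw [key (b x) h]; ring

/-- For any topological space `X`, the ring `C(X, ℂ)` of continuous complex-valued functions is a
pm-ring: every prime ideal is contained in a unique maximal ideal. -/
theorem stmt6 (X : Type*) [TopologicalSpace X]
    (p : Ideal C(X, ℂ)) (hp : p.IsPrime) :
    ∃! m : Ideal C(X, ℂ), m.IsMaximal ∧ p ≤ m := by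
  obtain ⟨m, hm, hpm⟩ := p.exists_le_maximal hp.ne_top
  refine ⟨m, ⟨hm, hpm⟩, ?_⟩
  rintro m' ⟨hm', hpm'⟩
  by_contra hne
  have hsup : m' ⊔ m = ⊤ := hm'.coprime_of_ne hm hne
  have h1 : (1 : C(X, ℂ)) ∈ m' ⊔ m := hsup ▸ Submodule.mem_top
  obtain ⟨a, ha, b, hb, hab⟩ := Submodule.mem_sup.mp h1
  obtain ⟨r, s, hrs⟩ := gelfand_cond X a b hab
  have hmem : (1 + r * a) * (1 + s * b) ∈ p := hrs ▸ p.zero_mem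
  rcases hp.mem_or_mem hmem with h | h
  · have : (1 : C(X, ℂ)) ∈ m' := by
      have h1a : (1 + r * a) - r * a ∈ m' := Ideal.sub_mem _ (hpm' h) (Ideal.mul_mem_left _ r ha)
      simpa using h1a
    exact hm'.ne_top (Ideal.eq_top_iff_one m' |>.mpr this)
  · have : (1 : C(X, ℂ)) ∈ m := by
      have h1b : (1 + s * b) - s * b ∈ m := Ideal.sub_mem _ (hpm h) (Ideal.mul_mem_left _ s hb)
      simpa using h1b
    exact hm.ne_top (Ideal.eq_top_iff_one m |>.mpr this)
end

section
/- Let X be a topological space and 𝔪 a maximal ideal of C(X,ℝ). Then 𝔪 is a z-ideal: for every f ∈ C(X,ℝ) such that Z(f) = Z(g) for some g ∈ 𝔪, one has f ∈ 𝔪. -/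
/-- The zero set `Z(f) = {x | f x = 0}` of a continuous function `f : C(X, ℝ)`. -/
def zeroSet {X : Type*} [TopologicalSpace X] (f : C(X, ℝ)) : Set X := {x | f x = 0}

/-- Every maximal ideal `𝔪` of `C(X, ℝ)` is a z-ideal: if `Z(f) = Z(g)` for some `g ∈ 𝔪`,
then `f ∈ 𝔪`. -/
theorem stmt7 (X : Type*) [TopologicalSpace X] (m : Ideal C(X, ℝ)) (hm : m.IsMaximal)
    (f g : C(X, ℝ)) (hg : g ∈ m) (hfg : zeroSet f = zeroSet g) : f ∈ m := by
  by_contra hf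
  obtain ⟨z, h, hh, hzf⟩ := hm.exists_inv hf
  set u : C(X, ℝ) := h * h + g * g with hu
  have hum : u ∈ m := m.add_mem (m.mul_mem_left h hh) (m.mul_mem_left g hg)
  have hune : ∀ x, u x ≠ 0 := by
    intro x hx
    simp only [hu, ContinuousMap.add_apply, ContinuousMap.mul_apply] at hx
    have hh0 : h x = 0 ∧ g x = 0 := by
      constructor <;> nlinarith [sq_nonneg (h x), sq_nonneg (g x)]
    have hgx : g x = 0 := hh0.2
    have hfx : f x = 0 := by
      have : x ∈ zeroSet g := hgx
      rw [← hfg] at this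
      exact this
    have := congrArg (fun F : C(X, ℝ) => F x) hzf
    simp [ContinuousMap.add_apply, ContinuousMap.mul_apply, hfx, hh0.1] at this
  have hunit : IsUnit u := by
    refine isUnit_iff_exists_inv.mpr ⟨⟨fun x => (u x)⁻¹, u.continuous.inv₀ hune⟩, ?_⟩
    ext x
    simp [mul_inv_cancel₀ (hune x)]
  exact hm.ne_top (m.eq_top_of_isUnit_mem hum hunit)
end

section
/- Let X be a topological space and I a proper z-ideal of C(X,ℝ). Then the following are equivalent: (1) I is a prime ideal; (2) I contains a prime ideal; (3) for all f, g ∈ C(X,ℝ) with f·g = 0, either f ∈ I or g ∈ I; (4) for every f ∈ C(X,ℝ) there exists g ∈ I such that either f(x) ≥ 0 for all x ∈ Z(g), or f(x) ≤ 0 for all x ∈ Z(g). -/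
/-- An ideal `I` of `C(X, ℝ)` is a z-ideal if whenever `Z(f) = Z(g)` for some `g ∈ I`,
then `f ∈ I`. -/
def IsZIdeal {X : Type*} [TopologicalSpace X] (I : Ideal C(X, ℝ)) : Prop :=
  ∀ f g : C(X, ℝ), g ∈ I → zeroSet f = zeroSet g → f ∈ I

lemma key_aux {X : Type*} [TopologicalSpace X] (I : Ideal C(X, ℝ)) (hz : IsZIdeal I)
    (f g k : C(X, ℝ)) (hfg : f * g ∈ I) (hk : k ∈ I)
    (hle : ∀ x ∈ zeroSet k, |g x| ≤ |f x|) : g ∈ I := by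
  have h1 : (f * g) * (f * g) + k * k ∈ I :=
    I.add_mem (I.mul_mem_left _ hfg) (I.mul_mem_left _ hk)
  have h2 : g * g + k * k ∈ I := by
    refine hz _ _ h1 ?_
    ext x
    simp only [zeroSet, Set.mem_setOf_eq, ContinuousMap.add_apply, ContinuousMap.mul_apply]
    rw [add_eq_zero_iff_of_nonneg (mul_self_nonneg _) (mul_self_nonneg _),
        add_eq_zero_iff_of_nonneg (mul_self_nonneg _) (mul_self_nonneg _),
        mul_self_eq_zero, mul_self_eq_zero, mul_self_eq_zero, mul_eq_zero]
    constructor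
    · rintro ⟨hg, hk0⟩; exact ⟨Or.inr hg, hk0⟩
    · rintro ⟨hfg0, hk0⟩
      refine ⟨?_, hk0⟩
      rcases hfg0 with hf | hg
      · have := hle x hk0
        rw [hf, abs_zero] at this
        exact abs_nonpos_iff.mp this
      · exact hg
  have h3 : g * g ∈ I := by
    have := I.sub_mem h2 (I.mul_mem_left k hk)
    simpa using this
  refine hz _ _ h3 ?_
  ext x
  simp [zeroSet, mul_self_eq_zero]

/-- For a proper z-ideal `I` of `C(X, ℝ)`, the following are equivalent:
(1) `I` is prime; (2) `I` contains a prime ideal; (3) `f * g = 0` implies `f ∈ I` or `g ∈ I`;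
(4) for every `f` there is `g ∈ I` such that `f` does not change sign on `Z(g)`. -/
theorem stmt8 (X : Type*) [TopologicalSpace X] (I : Ideal C(X, ℝ)) (hI : I ≠ ⊤)
    (hz : IsZIdeal I) :
    List.TFAE [I.IsPrime,
      ∃ p : Ideal C(X, ℝ), p.IsPrime ∧ p ≤ I,
      ∀ f g : C(X, ℝ), f * g = 0 → f ∈ I ∨ g ∈ I,
      ∀ f : C(X, ℝ), ∃ g ∈ I,
        (∀ x ∈ zeroSet g, 0 ≤ f x) ∨ (∀ x ∈ zeroSet g, f x ≤ 0)] := by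
  tfae_have 1 → 2 := fun h => ⟨I, h, le_refl I⟩
  tfae_have 2 → 3 := by
    rintro ⟨p, hp, hpI⟩ f g hfg
    rcases hp.mem_or_mem (show f * g ∈ p from hfg ▸ p.zero_mem) with h | h
    · exact Or.inl (hpI h)
    · exact Or.inr (hpI h)
  tfae_have 3 → 4 := by
    intro h3 f
    have hmul : (f ⊔ 0) * ((-f) ⊔ 0) = 0 := by
      ext x
      simp only [ContinuousMap.mul_apply, ContinuousMap.sup_apply, ContinuousMap.neg_apply,
        ContinuousMap.zero_apply]
      rcases le_total (f x) 0 with h | h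
      · rw [sup_eq_right.mpr h, zero_mul]
      · rw [sup_eq_right.mpr (neg_nonpos.mpr h), mul_zero]
    rcases h3 _ _ hmul with h | h
    · refine ⟨_, h, Or.inr fun x hx => ?_⟩
      have hx' : f x ⊔ 0 = 0 := hx
      exact le_sup_left.trans hx'.le
    · refine ⟨_, h, Or.inl fun x hx => ?_⟩
      have hx' : -f x ⊔ 0 = 0 := hx
      have : -f x ≤ 0 := le_sup_left.trans hx'.le
      linarith
  tfae_have 4 → 1 := by
    intro h4
    refine ⟨hI, fun {f g} hfg => ?_⟩
    obtain ⟨k, hk, hcase⟩ := h4 (|f| - |g|)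
    rcases hcase with h | h
    · right
      refine key_aux I hz f g k hfg hk fun x hx => ?_
      have := h x hx
      simpa [sub_nonneg] using this
    · left
      refine key_aux I hz g f k (by rwa [mul_comm]) hk fun x hx => ?_
      have := h x hx
      simpa [sub_nonpos] using this
  tfae_finish
end
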